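/- arXiv:2312.09759 — 3 statements merged into one kernel-verified Lean document; each statement's English description precedes it below -/
import Mathlib

section
/- Let u, v: ℝ² → ℝ be smooth functions of (x,t) satisfying the Liouville-type system u_{xt} = e^{2u−v} and v_{xt} = e^{2v−u}. Then λ₁ = u_x² − u_x v_x + v_x² − u_{xx} − v_{xx} satisfies ∂λ₁/∂t = 0, i.e., λ₁ is a first integral depending on x only. -/
/-- partial derivative in the first variable -/
noncomputable def pdx (u : ℝ → ℝ → ℝ) : ℝ → ℝ → ℝ := fun x t => deriv (fun x' => u x' t) x

private lemma hd_fst (f : ℝ × ℝ → ℝ) (hf : Differentiable ℝ f) (x t : ℝ) :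
    HasDerivAt (fun x' => f (x', t)) (fderiv ℝ f (x, t) (1, 0)) x :=
  (hf (x, t)).hasFDerivAt.comp_hasDerivAt x ((hasDerivAt_id x).prodMk (hasDerivAt_const x t))

private lemma hd_snd (f : ℝ × ℝ → ℝ) (hf : Differentiable ℝ f) (x t : ℝ) :
    HasDerivAt (fun t' => f (x, t')) (fderiv ℝ f (x, t) (0, 1)) t :=
  (hf (x, t)).hasFDerivAt.comp_hasDerivAt t ((hasDerivAt_const t x).prodMk (hasDerivAt_id t))

private lemma smooth_pd (f : ℝ × ℝ → ℝ) (hf : ContDiff ℝ (⊤ : ℕ∞) f) (w : ℝ × ℝ) :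
    ContDiff ℝ (⊤ : ℕ∞) (fun p => fderiv ℝ f p w) :=
  (hf.fderiv_right (by simp)).clm_apply contDiff_const

private lemma swap (f : ℝ × ℝ → ℝ) (hf : ContDiff ℝ (⊤ : ℕ∞) f) (x t : ℝ) :
    deriv (fun t' => deriv (fun x' => f (x', t')) x) t
      = deriv (fun x' => deriv (fun t' => f (x', t')) t) x := by
  have hdf : Differentiable ℝ f := hf.differentiable (by simp)
  have hGd : Differentiable ℝ (fderiv ℝ f) := (hf.fderiv_right (m := (⊤ : ℕ∞)) (by simp)).differentiable (by simp)
  have hsym : ∀ v w : ℝ × ℝ,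
      fderiv ℝ (fderiv ℝ f) (x, t) v w = fderiv ℝ (fderiv ℝ f) (x, t) w v :=
    fun v w => second_derivative_symmetric (fun y => (hdf y).hasFDerivAt)
      (hGd (x, t)).hasFDerivAt v w
  have e1 : (fun t' => deriv (fun x' => f (x', t')) x)
      = fun t' => fderiv ℝ f (x, t') (1, 0) := by
    funext t'; exact (hd_fst f hdf x t').deriv
  have e2 : (fun x' => deriv (fun t' => f (x', t')) t)
      = fun x' => fderiv ℝ f (x', t) (0, 1) := by
    funext x'; exact (hd_snd f hdf x' t).deriv
  rw [e1, e2]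
  have h1 := hd_snd (fun p => fderiv ℝ f p (1, 0))
    ((smooth_pd f hf (1, 0)).differentiable (by simp)) x t
  have h2 := hd_fst (fun p => fderiv ℝ f p (0, 1))
    ((smooth_pd f hf (0, 1)).differentiable (by simp)) x t
  rw [h1.deriv, h2.deriv,
    fderiv_clm_apply (hGd _) (differentiableAt_const _),
    fderiv_clm_apply (hGd _) (differentiableAt_const _)]
  simp [ContinuousLinearMap.flip_apply, hsym (0, 1) (1, 0)]

/-- key lemma: for smooth `w` with `∂t ∂x w = r`, we get `HasDerivAt` facts. -/
private lemma key (w : ℝ → ℝ → ℝ) (hw : ContDiff ℝ (⊤ : ℕ∞) (fun p : ℝ × ℝ => w p.1 p.2))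
    (x t : ℝ) (r : ℝ → ℝ → ℝ)
    (hr : ∀ x' t', deriv (fun t'' => pdx w x' t'') t' = r x' t') :
    HasDerivAt (fun t' => pdx w x t') (r x t) t ∧
    HasDerivAt (fun t' => pdx (pdx w) x t') (deriv (fun x' => r x' t) x) t := by
  set W : ℝ × ℝ → ℝ := fun p => w p.1 p.2 with hW
  have hWd : Differentiable ℝ W := hw.differentiable (by simp)
  set G : ℝ × ℝ → ℝ := fun p => fderiv ℝ W p (1, 0) with hG
  have hGsm : ContDiff ℝ (⊤ : ℕ∞) G := smooth_pd W hw (1, 0)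
  have hGd : Differentiable ℝ G := hGsm.differentiable (by simp)
  have hA : ∀ x' t', pdx w x' t' = G (x', t') := fun x' t' => (hd_fst W hWd x' t').deriv
  have hpeq : (fun t' => pdx w x t') = fun t' => G (x, t') := funext fun t' => hA x t'
  -- first part
  have h1 : HasDerivAt (fun t' => pdx w x t') (fderiv ℝ G (x, t) (0, 1)) t := by
    rw [hpeq]; exact hd_snd G hGd x t
  have h1' : HasDerivAt (fun t' => pdx w x t') (r x t) t := by
    have := h1.deriv; rw [hr x t] at this; exact this ▸ h1
  refine ⟨h1', ?_⟩
  -- second part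
  have hA2 : ∀ t', pdx (pdx w) x t' = fderiv ℝ G (x, t') (1, 0) := by
    intro t'
    have : (fun x' => pdx w x' t') = fun x' => G (x', t') := funext fun x' => hA x' t'
    show deriv (fun x' => pdx w x' t') x = _
    rw [this]; exact (hd_fst G hGd x t').deriv
  have hp2 : (fun t' => pdx (pdx w) x t')
      = fun t' => (fun p => fderiv ℝ G p (1, 0)) (x, t') := funext fun t' => hA2 t'
  have h2 : HasDerivAt (fun t' => pdx (pdx w) x t')
      (fderiv ℝ (fun p => fderiv ℝ G p (1, 0)) (x, t) (0, 1)) t := by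
    rw [hp2]; exact hd_snd _ ((smooth_pd G hGsm (1, 0)).differentiable (by simp)) x t
  have hval : deriv (fun t' => pdx (pdx w) x t') t = deriv (fun x' => r x' t) x := by
    have hs := swap G hGsm x t
    have eL : (fun t' => deriv (fun x' => G (x', t')) x) = fun t' => pdx (pdx w) x t' := by
      funext t'
      have : (fun x' => G (x', t')) = fun x' => pdx w x' t' :=
        funext fun x' => (hA x' t').symm
      rw [this]; rfl
    have eR : (fun x' => deriv (fun t' => G (x', t')) t) = fun x' => r x' t := by
      funext x'
      have : (fun t' => G (x', t')) = fun t' => pdx w x' t' :=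
        funext fun t' => (hA x' t').symm
      rw [this, hr]
    rw [eL, eR] at hs
    exact hs
  have := h2.deriv
  rw [hval] at this
  exact this ▸ h2

/-- For smooth solutions of the Liouville-type system
`u_{xt} = e^{2u−v}`, `v_{xt} = e^{2v−u}`, the quantity
`λ₁ = u_x² − u_x v_x + v_x² − u_{xx} − v_{xx}` satisfies `∂λ₁/∂t = 0`. -/
theorem stmt3 (u v : ℝ → ℝ → ℝ)
    (hu : ContDiff ℝ (⊤ : ℕ∞) (fun p : ℝ × ℝ => u p.1 p.2))
    (hv : ContDiff ℝ (⊤ : ℕ∞) (fun p : ℝ × ℝ => v p.1 p.2))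
    (hueq : ∀ x t, deriv (fun t' => pdx u x t') t = Real.exp (2 * u x t - v x t))
    (hveq : ∀ x t, deriv (fun t' => pdx v x t') t = Real.exp (2 * v x t - u x t)) :
    ∀ x t, deriv (fun t' =>
        (pdx u x t') ^ 2 - pdx u x t' * pdx v x t' + (pdx v x t') ^ 2
          - pdx (pdx u) x t' - pdx (pdx v) x t') t = 0 := by
  intro x t
  have hud : Differentiable ℝ (fun p : ℝ × ℝ => u p.1 p.2) := hu.differentiable (by simp)
  have hvd : Differentiable ℝ (fun p : ℝ × ℝ => v p.1 p.2) := hv.differentiable (by simp)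
  -- `∂x u` and `∂x v` as HasDerivAt in x
  have hux : HasDerivAt (fun x' => u x' t) (pdx u x t) x := by
    have h := hd_fst (fun p : ℝ × ℝ => u p.1 p.2) hud x t
    have : pdx u x t = fderiv ℝ (fun p : ℝ × ℝ => u p.1 p.2) (x, t) (1, 0) := h.deriv
    exact this ▸ h
  have hvx : HasDerivAt (fun x' => v x' t) (pdx v x t) x := by
    have h := hd_fst (fun p : ℝ × ℝ => v p.1 p.2) hvd x t
    have : pdx v x t = fderiv ℝ (fun p : ℝ × ℝ => v p.1 p.2) (x, t) (1, 0) := h.deriv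
    exact this ▸ h
  obtain ⟨hut, h2u⟩ := key u hu x t (fun x' t' => Real.exp (2 * u x' t' - v x' t')) hueq
  obtain ⟨hvt, h2v⟩ := key v hv x t (fun x' t' => Real.exp (2 * v x' t' - u x' t')) hveq
  -- compute the x-derivatives of the exponentials
  have hE1 : HasDerivAt (fun x' => Real.exp (2 * u x' t - v x' t))
      (Real.exp (2 * u x t - v x t) * (2 * pdx u x t - pdx v x t)) x :=
    ((hux.const_mul 2).sub hvx).exp
  have hE2 : HasDerivAt (fun x' => Real.exp (2 * v x' t - u x' t))
      (Real.exp (2 * v x t - u x t) * (2 * pdx v x t - pdx u x t)) x :=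
    ((hvx.const_mul 2).sub hux).exp
  rw [hE1.deriv] at h2u
  rw [hE2.deriv] at h2v
  have H := ((((hut.pow 2).sub (hut.mul hvt)).add (hvt.pow 2)).sub h2u).sub h2v
  refine H.deriv.trans ?_
  push_cast
  ring
end

section
/- Let u, v: ℝ² → ℝ be smooth solutions of u_{xt} = e^{2u−v}, v_{xt} = e^{2v−u}. Then λ₂ = u_x(v_x² − u_x v_x + 2u_{xx} − v_{xx}) − u_{xxx} satisfies ∂λ₂/∂t = 0. -/
noncomputable def D1 (W : ℝ × ℝ → ℝ) : ℝ × ℝ → ℝ := fun p => fderiv ℝ W p (1, 0)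
noncomputable def D2 (W : ℝ × ℝ → ℝ) : ℝ × ℝ → ℝ := fun p => fderiv ℝ W p (0, 1)

lemma contDiff_D1 {W : ℝ × ℝ → ℝ} (h : ContDiff ℝ (⊤ : ℕ∞) W) : ContDiff ℝ (⊤ : ℕ∞) (D1 W) :=
  (h.fderiv_right (by simp)).clm_apply contDiff_const

lemma hasDerivAt_slice1 (W : ℝ × ℝ → ℝ) (hW : Differentiable ℝ W) (x t : ℝ) :
    HasDerivAt (fun x' => W (x', t)) (D1 W (x, t)) x := by
  have h1 : HasDerivAt (fun x' : ℝ => ((x' : ℝ), t)) (1, 0) x :=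
    (hasDerivAt_id x).prodMk (hasDerivAt_const x t)
  exact (hW (x, t)).hasFDerivAt.comp_hasDerivAt x h1

lemma hasDerivAt_slice2 (W : ℝ × ℝ → ℝ) (hW : Differentiable ℝ W) (x t : ℝ) :
    HasDerivAt (fun t' => W (x, t')) (D2 W (x, t)) t := by
  have h1 : HasDerivAt (fun t' : ℝ => ((x : ℝ), t')) (0, 1) t :=
    (hasDerivAt_const t x).prodMk (hasDerivAt_id t)
  exact (hW (x, t)).hasFDerivAt.comp_hasDerivAt t h1

lemma symmD (W : ℝ × ℝ → ℝ) (hW : ContDiff ℝ (⊤ : ℕ∞) W) (p : ℝ × ℝ) :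
    D2 (D1 W) p = D1 (D2 W) p := by
  have hW1 : ∀ q, HasFDerivAt W (fderiv ℝ W q) q := fun q =>
    (hW.differentiable (by simp) q).hasFDerivAt
  have hW2 : HasFDerivAt (fderiv ℝ W) (fderiv ℝ (fderiv ℝ W) p) p :=
    (((hW.fderiv_right (m := (⊤ : ℕ∞)) (by simp)).differentiable (by simp)) p).hasFDerivAt
  have hsymm := second_derivative_symmetric hW1 hW2 (0, 1) (1, 0)
  have hdiff : DifferentiableAt ℝ (fderiv ℝ W) p :=
    ((hW.fderiv_right (m := (⊤ : ℕ∞)) (by simp)).differentiable (by simp)) p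
  have e1 : D2 (D1 W) p = fderiv ℝ (fderiv ℝ W) p (0,1) (1,0) := by
    unfold D1 D2
    rw [fderiv_clm_apply hdiff (differentiableAt_const _)]
    simp
  have e2 : D1 (D2 W) p = fderiv ℝ (fderiv ℝ W) p (1,0) (0,1) := by
    unfold D1 D2
    rw [fderiv_clm_apply hdiff (differentiableAt_const _)]
    simp
  rw [e1, e2, hsymm]

lemma pdx_eq (w : ℝ → ℝ → ℝ) (hW : Differentiable ℝ (fun p : ℝ × ℝ => w p.1 p.2))
    (x t : ℝ) : pdx w x t = D1 (fun p : ℝ × ℝ => w p.1 p.2) (x, t) :=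
  (hasDerivAt_slice1 (fun p : ℝ × ℝ => w p.1 p.2) hW x t).deriv


lemma D1_val (W : ℝ × ℝ → ℝ) (hW : Differentiable ℝ W) {p : ℝ × ℝ} {c : ℝ}
    (h : HasDerivAt (fun x' => W (x', p.2)) c p.1) : D1 W p = c := by
  have h2 := (hasDerivAt_slice1 W hW p.1 p.2).unique h
  rwa [Prod.mk.eta] at h2

/-- For smooth solutions of `u_{xt} = e^{2u−v}`, `v_{xt} = e^{2v−u}`,
the quantity `λ₂ = u_x(v_x² − u_x v_x + 2u_{xx} − v_{xx}) − u_{xxx}` satisfies `∂λ₂/∂t = 0`. -/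
theorem stmt4 (u v : ℝ → ℝ → ℝ)
    (hu : ContDiff ℝ (⊤ : ℕ∞) (fun p : ℝ × ℝ => u p.1 p.2))
    (hv : ContDiff ℝ (⊤ : ℕ∞) (fun p : ℝ × ℝ => v p.1 p.2))
    (hueq : ∀ x t, deriv (fun t' => pdx u x t') t = Real.exp (2 * u x t - v x t))
    (hveq : ∀ x t, deriv (fun t' => pdx v x t') t = Real.exp (2 * v x t - u x t)) :
    ∀ x t, deriv (fun t' =>
        pdx u x t' * ((pdx v x t') ^ 2 - pdx u x t' * pdx v x t'
            + 2 * pdx (pdx u) x t' - pdx (pdx v) x t')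
          - pdx (pdx (pdx u)) x t') t = 0 := by
  intro x t
  set U : ℝ × ℝ → ℝ := fun p => u p.1 p.2 with hU
  set V : ℝ × ℝ → ℝ := fun p => v p.1 p.2 with hV
  -- smoothness of all iterated partials
  have hU1 : ContDiff ℝ (⊤ : ℕ∞) (D1 U) := contDiff_D1 hu
  have hV1 : ContDiff ℝ (⊤ : ℕ∞) (D1 V) := contDiff_D1 hv
  have hU2 : ContDiff ℝ (⊤ : ℕ∞) (D1 (D1 U)) := contDiff_D1 hU1
  have hV2 : ContDiff ℝ (⊤ : ℕ∞) (D1 (D1 V)) := contDiff_D1 hV1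
  have hU3 : ContDiff ℝ (⊤ : ℕ∞) (D1 (D1 (D1 U))) := contDiff_D1 hU2
  -- pdx translations
  have epu : ∀ x' t', pdx u x' t' = D1 U (x', t') := fun x' t' =>
    pdx_eq u (hu.differentiable (by simp)) x' t'
  have epv : ∀ x' t', pdx v x' t' = D1 V (x', t') := fun x' t' =>
    pdx_eq v (hv.differentiable (by simp)) x' t'
  have epu2 : ∀ x' t', pdx (pdx u) x' t' = D1 (D1 U) (x', t') := by
    intro x' t'
    have : pdx (pdx u) x' t' = pdx (fun a b => D1 U (a, b)) x' t' := by
      show deriv (fun a => pdx u a t') x' = deriv (fun a => D1 U (a, t')) x'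
      congr 1; funext a; exact epu a t'
    rw [this]
    exact pdx_eq _ (hU1.differentiable (by simp)) x' t'
  have epv2 : ∀ x' t', pdx (pdx v) x' t' = D1 (D1 V) (x', t') := by
    intro x' t'
    have : pdx (pdx v) x' t' = pdx (fun a b => D1 V (a, b)) x' t' := by
      show deriv (fun a => pdx v a t') x' = deriv (fun a => D1 V (a, t')) x'
      congr 1; funext a; exact epv a t'
    rw [this]
    exact pdx_eq _ (hV1.differentiable (by simp)) x' t'
  have epu3 : ∀ x' t', pdx (pdx (pdx u)) x' t' = D1 (D1 (D1 U)) (x', t') := by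
    intro x' t'
    have : pdx (pdx (pdx u)) x' t' = pdx (fun a b => D1 (D1 U) (a, b)) x' t' := by
      show deriv (fun a => pdx (pdx u) a t') x' = deriv (fun a => D1 (D1 U) (a, t')) x'
      congr 1; funext a; exact epu2 a t'
    rw [this]
    exact pdx_eq _ (hU2.differentiable (by simp)) x' t'
  -- the equations in D-form
  have hE : ∀ p : ℝ × ℝ, D2 (D1 U) p = Real.exp (2 * U p - V p) := by
    intro p
    have h := hueq p.1 p.2
    have : deriv (fun t' => pdx u p.1 t') p.2 = D2 (D1 U) p := by
      have : (fun t' => pdx u p.1 t') = fun t' => D1 U (p.1, t') := by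
        funext t'; exact epu p.1 t'
      rw [this]
      exact (hasDerivAt_slice2 (D1 U) (hU1.differentiable (by simp)) p.1 p.2).deriv
    rw [this] at h
    simpa using h
  have hF : ∀ p : ℝ × ℝ, D2 (D1 V) p = Real.exp (2 * V p - U p) := by
    intro p
    have h := hveq p.1 p.2
    have : deriv (fun t' => pdx v p.1 t') p.2 = D2 (D1 V) p := by
      have : (fun t' => pdx v p.1 t') = fun t' => D1 V (p.1, t') := by
        funext t'; exact epv p.1 t'
      rw [this]
      exact (hasDerivAt_slice2 (D1 V) (hV1.differentiable (by simp)) p.1 p.2).deriv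
    rw [this] at h
    simpa using h
  -- abbreviations for the exponentials
  set E : ℝ × ℝ → ℝ := fun p => Real.exp (2 * U p - V p) with hEdef
  set F : ℝ × ℝ → ℝ := fun p => Real.exp (2 * V p - U p) with hFdef
  have hEsm : ContDiff ℝ (⊤ : ℕ∞) E := Real.contDiff_exp.comp ((contDiff_const.mul hu).sub hv)
  -- second-order t-derivatives
  have hE2 : ∀ p : ℝ × ℝ, D2 (D1 (D1 U)) p = (2 * D1 U p - D1 V p) * E p := by
    intro p
    rw [symmD (D1 U) hU1 p]
    have hfe : D2 (D1 U) = E := funext fun q => hE q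
    rw [hfe]
    refine D1_val E (hEsm.differentiable (by simp)) ?_
    have hus := hasDerivAt_slice1 U (hu.differentiable (by simp)) p.1 p.2
    have hvs := hasDerivAt_slice1 V (hv.differentiable (by simp)) p.1 p.2
    have h := (((hus.const_mul 2).sub hvs).exp)
    rw [Prod.mk.eta] at h
    convert h using 1
    · rfl
    simp only [hEdef, hFdef, Pi.sub_apply, Prod.mk.eta]
    ring
  have hF2 : ∀ p : ℝ × ℝ, D2 (D1 (D1 V)) p = (2 * D1 V p - D1 U p) * F p := by
    intro p
    rw [symmD (D1 V) hV1 p]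
    have hfe : D2 (D1 V) = F := funext fun q => hF q
    rw [hfe]
    have hFsm : ContDiff ℝ (⊤ : ℕ∞) F := Real.contDiff_exp.comp ((contDiff_const.mul hv).sub hu)
    refine D1_val F (hFsm.differentiable (by simp)) ?_
    have hus := hasDerivAt_slice1 U (hu.differentiable (by simp)) p.1 p.2
    have hvs := hasDerivAt_slice1 V (hv.differentiable (by simp)) p.1 p.2
    have h := (((hvs.const_mul 2).sub hus).exp)
    rw [Prod.mk.eta] at h
    convert h using 1
    · rfl
    simp only [hEdef, hFdef, Pi.sub_apply, Prod.mk.eta]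
    ring
  -- third-order
  have hE3 : ∀ p : ℝ × ℝ, D2 (D1 (D1 (D1 U))) p
      = (2 * D1 (D1 U) p - D1 (D1 V) p) * E p + (2 * D1 U p - D1 V p) ^ 2 * E p := by
    intro p
    rw [symmD (D1 (D1 U)) hU2 p]
    have hfe : D2 (D1 (D1 U)) = fun q => (2 * D1 U q - D1 V q) * E q :=
      funext fun q => hE2 q
    rw [hfe]
    have hGsm : ContDiff ℝ (⊤ : ℕ∞) (fun q => (2 * D1 U q - D1 V q) * E q) :=
      ((contDiff_const.mul hU1).sub hV1).mul hEsm
    refine D1_val _ (hGsm.differentiable (by simp)) ?_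
    have hus := hasDerivAt_slice1 U (hu.differentiable (by simp)) p.1 p.2
    have hvs := hasDerivAt_slice1 V (hv.differentiable (by simp)) p.1 p.2
    have hu2s := hasDerivAt_slice1 (D1 U) (hU1.differentiable (by simp)) p.1 p.2
    have hv2s := hasDerivAt_slice1 (D1 V) (hV1.differentiable (by simp)) p.1 p.2
    have hexp := (((hus.const_mul 2).sub hvs).exp)
    have h := ((hu2s.const_mul 2).sub hv2s).mul hexp
    rw [Prod.mk.eta] at h
    convert h using 1
    · rfl
    · rfl
    · rfl
    simp only [hEdef, hFdef, Pi.sub_apply, Prod.mk.eta]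
    ring
  -- t-derivatives of the slices at (x, t)
  have ha : HasDerivAt (fun t' => D1 U (x, t')) (E (x, t)) t := by
    have h := hasDerivAt_slice2 (D1 U) (hU1.differentiable (by simp)) x t
    rwa [hE (x, t)] at h
  have hb : HasDerivAt (fun t' => D1 V (x, t')) (F (x, t)) t := by
    have h := hasDerivAt_slice2 (D1 V) (hV1.differentiable (by simp)) x t
    rwa [hF (x, t)] at h
  have hc : HasDerivAt (fun t' => D1 (D1 U) (x, t'))
      ((2 * D1 U (x, t) - D1 V (x, t)) * E (x, t)) t := by
    have h := hasDerivAt_slice2 (D1 (D1 U)) (hU2.differentiable (by simp)) x t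
    rwa [hE2 (x, t)] at h
  have hd : HasDerivAt (fun t' => D1 (D1 V) (x, t'))
      ((2 * D1 V (x, t) - D1 U (x, t)) * F (x, t)) t := by
    have h := hasDerivAt_slice2 (D1 (D1 V)) (hV2.differentiable (by simp)) x t
    rwa [hF2 (x, t)] at h
  have he3 : HasDerivAt (fun t' => D1 (D1 (D1 U)) (x, t'))
      ((2 * D1 (D1 U) (x, t) - D1 (D1 V) (x, t)) * E (x, t)
        + (2 * D1 U (x, t) - D1 V (x, t)) ^ 2 * E (x, t)) t := by
    have h := hasDerivAt_slice2 (D1 (D1 (D1 U))) (hU3.differentiable (by simp)) x t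
    rwa [hE3 (x, t)] at h
  -- rewrite the goal in D-form and conclude
  have goalrw : (fun t' =>
        pdx u x t' * ((pdx v x t') ^ 2 - pdx u x t' * pdx v x t'
            + 2 * pdx (pdx u) x t' - pdx (pdx v) x t')
          - pdx (pdx (pdx u)) x t')
      = fun t' => D1 U (x, t') * ((D1 V (x, t')) ^ 2 - D1 U (x, t') * D1 V (x, t')
            + 2 * D1 (D1 U) (x, t') - D1 (D1 V) (x, t'))
          - D1 (D1 (D1 U)) (x, t') := by
    funext t'
    rw [epu, epv, epu2, epv2, epu3]
  rw [goalrw]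
  have big := ((ha.mul ((((hb.pow 2).sub (ha.mul hb)).add (hc.const_mul 2)).sub hd)).sub he3)
  rw [HasDerivAt.deriv (f := fun t' => D1 U (x, t') * ((D1 V (x, t')) ^ 2 - D1 U (x, t') * D1 V (x, t') + 2 * D1 (D1 U) (x, t') - D1 (D1 V) (x, t')) - D1 (D1 (D1 U)) (x, t')) big]
  simp only [Pi.sub_apply, Pi.add_apply, Pi.mul_apply, Pi.pow_apply]
  ring
end

section
/- Suppose u: ℝ → ℝ is a smooth solution of the travelling-wave ODE du/dz = d/dz( M(u) d²Ψ(u)/dz² ) with M = Ψ' (smooth, Ψ' ≠ 0), and suppose u' ≠ 0. Then there exist constants α, β such that u² + αu + β = (u'·Ψ'(u))² holds along the solution. -/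
/-- For a smooth solution of the travelling-wave ODE
`u' = d/dz(Ψ'(u)·(Ψ(u))'')` with `u' ≠ 0` and `Ψ'∘u ≠ 0`, there exist constants
`α, β` with `u² + αu + β = (u'·Ψ'(u))²` along the solution. -/
theorem stmt13 (Ψ u : ℝ → ℝ)
    (hΨ : ContDiff ℝ (⊤ : ℕ∞) Ψ) (hu : ContDiff ℝ (⊤ : ℕ∞) u)
    (hu' : ∀ z, deriv u z ≠ 0) (hΨ' : ∀ z, deriv Ψ (u z) ≠ 0)
    (hode : ∀ z, deriv u z =
      deriv (fun z' => deriv Ψ (u z') * deriv (deriv (fun z'' => Ψ (u z''))) z') z) :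
    ∃ α β : ℝ, ∀ z, (u z) ^ 2 + α * u z + β = (deriv u z * deriv Ψ (u z)) ^ 2 := by
  set v : ℝ → ℝ := fun z'' => Ψ (u z'') with hv_def
  have hΨi : ContDiff ℝ (⊤:ℕ∞) Ψ := hΨ.of_le (by simp)
  have hui : ContDiff ℝ (⊤:ℕ∞) u := hu.of_le (by simp)
  have hv : ContDiff ℝ (⊤:ℕ∞) v := hΨi.comp hui
  have hudiff : Differentiable ℝ u := hui.differentiable (by simp)
  have hΨ2 : ContDiff ℝ (⊤:ℕ∞) (deriv Ψ) := (contDiff_infty_iff_deriv.mp hΨi).2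
  have hv2 : ContDiff ℝ (⊤:ℕ∞) (deriv v) := (contDiff_infty_iff_deriv.mp hv).2
  have hv3 : ContDiff ℝ (⊤:ℕ∞) (deriv (deriv v)) := (contDiff_infty_iff_deriv.mp hv2).2
  -- derivative of v
  have e1 : ∀ z, deriv v z = deriv Ψ (u z) * deriv u z := by
    intro z
    have : HasDerivAt v (deriv Ψ (u z) * deriv u z) z :=
      (((hΨi.differentiable (by simp)) (u z)).hasDerivAt.comp z (hudiff z).hasDerivAt)
    exact this.deriv
  set G : ℝ → ℝ := fun z' => deriv Ψ (u z') * deriv (deriv v) z' with hG_def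
  have hGdiff : Differentiable ℝ G :=
    ((hΨ2.comp hui).mul hv3).differentiable (by simp)
  -- first integral: u - G is constant
  set g : ℝ → ℝ := fun z => u z - G z with hg_def
  have hgdiff : Differentiable ℝ g := hudiff.sub hGdiff
  have hg0 : ∀ z, deriv g z = 0 := by
    intro z
    have : HasDerivAt g (deriv u z - deriv G z) z := ((hudiff z).hasDerivAt.sub (hGdiff z).hasDerivAt)
    rw [this.deriv, hode z, sub_self]
  set c : ℝ := g 0 with hc_def
  have hgc : ∀ z, G z = u z - c := by
    intro z
    have := is_const_of_deriv_eq_zero hgdiff hg0 z 0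
    have hc2 : c = u 0 - G 0 := rfl
    simp only [hg_def] at this
    linarith [this, hc2]
  -- second integral
  set h : ℝ → ℝ := fun z => (deriv v z) ^ 2 - (u z) ^ 2 + 2 * c * u z with hh_def
  have hhder : ∀ z, HasDerivAt h 0 z := by
    intro z
    have H : HasDerivAt h
        ((2 * deriv v z ^ 1 * deriv (deriv v) z - 2 * u z ^ 1 * deriv u z)
          + 2 * c * deriv u z) z := by
      exact (((hv2.differentiable (by simp) z).hasDerivAt.pow 2).sub
        ((hudiff z).hasDerivAt.pow 2)).add ((hudiff z).hasDerivAt.const_mul (2 * c))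
    have e2 : deriv Ψ (u z) * deriv (deriv v) z = u z - c := hgc z
    have : (2 * deriv v z ^ 1 * deriv (deriv v) z - 2 * u z ^ 1 * deriv u z)
          + 2 * c * deriv u z = 0 := by
      rw [e1 z]
      linear_combination 2 * deriv u z * e2
    rwa [this] at H
  have hhdiff : Differentiable ℝ h := fun z => (hhder z).differentiableAt
  have hhc : ∀ z, h z = h 0 := by
    intro z
    exact is_const_of_deriv_eq_zero hhdiff (fun z => (hhder z).deriv) z 0
  refine ⟨-(2 * c), h 0, fun z => ?_⟩
  have := hhc z
  simp only [hh_def] at this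
  rw [e1 z] at this
  have hβ : h 0 = deriv v 0 ^ 2 - u 0 ^ 2 + 2 * c * u 0 := rfl
  linear_combination hβ - this
end
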